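/- Pointwise optimality characterization: a continuous function c : [0,τ] → ℝ^M with ∫₀^τ c(θ)dθ = ψ minimizes J₂ if and only if there exists λ ∈ ℝ^M such that Γ(θ)ᵀ(Γ(θ)c(θ) − m̂) + μ c(θ) + λ = 0 for all θ ∈ [0, τ]. -/

import Mathlib

open Set Matrix

/-- Squared Euclidean norm of a finite real vector. -/
def sqNorm {k : ℕ} (v : Fin k → ℝ) : ℝ := ∑ i, (v i)^2

/-- The functional J₂ of the paper. -/
noncomputable def J2 {N M : ℕ} (τ μ : ℝ) (Γ : ℝ → Matrix (Fin N) (Fin M) ℝ)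
    (mhat : Fin N → ℝ) (c : ℝ → Fin M → ℝ) : ℝ :=
  (∫ θ in (0:ℝ)..τ, sqNorm ((Γ θ).mulVec (c θ) - mhat))
    + μ * ∫ θ in (0:ℝ)..τ, sqNorm (c θ)

/-!
Expanding the square gives `J₂(c + d) = J₂(c) + 2 ∫ ⟨G_c, d⟩ + Q(d)`, where
`G_c = Γᵀ(Γc − m̂) + μc` and `Q(d)` is `J₂` with `m̂ = 0`, a nonnegative quadratic form.
The competitors are exactly `c + d` with `∫ d = 0`, and this class is stable under scaling
`d`, so `c` is a minimizer iff `∫ ⟨G_c, d⟩ = 0` for all such `d`. Testing against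
`d = G_c − (mean of G_c)` turns this into `∫ ‖d‖² = 0`, so `G_c` is constant on `[0, τ]`
(du Bois-Reymond); the constant is `−λ`.
-/

open MeasureTheory

theorem forall_le_add_iff_forall_eq_zero {V : Type*} [AddCommGroup V] [Module ℝ V]
    {S : Set V} (hS : ∀ t : ℝ, ∀ d ∈ S, t • d ∈ S) {f L Q : V → ℝ} {x : V}
    (hf : ∀ d ∈ S, f (x + d) = f x + L d + Q d)
    (hL : ∀ t : ℝ, ∀ d ∈ S, L (t • d) = t * L d)
    (hQ : ∀ t : ℝ, ∀ d ∈ S, Q (t • d) = t ^ 2 * Q d) (hQ₀ : ∀ d ∈ S, 0 ≤ Q d) :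
    (∀ d ∈ S, f x ≤ f (x + d)) ↔ ∀ d ∈ S, L d = 0 := by
  constructor
  · intro hmin d hd
    have hquad : ∀ t : ℝ, 0 ≤ Q d * (t * t) + L d * t + 0 := fun t => by
      have := hmin _ (hS t d hd)
      rw [hf _ (hS t d hd), hL t d hd, hQ t d hd] at this
      linarith
    have hdisc := discrim_le_zero hquad
    rw [discrim] at hdisc
    nlinarith [sq_nonneg (L d)]
  · intro hL₀ d hd
    rw [hf d hd, hL₀ d hd]
    linarith [hQ₀ d hd]

theorem eqOn_zero_of_intervalIntegral_eq_zero {f : ℝ → ℝ} {a b : ℝ} (hab : a < b)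
    (hf : ContinuousOn f (Icc a b)) (hf₀ : ∀ x ∈ Icc a b, 0 ≤ f x)
    (hint : ∫ x in a..b, f x = 0) : EqOn f 0 (Icc a b) := by
  intro x hx
  by_contra hne
  have hpos := intervalIntegral.integral_lt_integral_of_continuousOn_of_le_of_exists_lt hab
    continuousOn_const hf (fun y hy => hf₀ y (Ioc_subset_Icc_self hy))
    ⟨x, hx, lt_of_le_of_ne (hf₀ x hx) (Ne.symm hne)⟩
  simp [hint] at hpos

theorem intervalIntegral.integral_const_dotProduct {ι : Type*} [Fintype ι] {a b : ℝ}
    (v : ι → ℝ) {d : ℝ → ι → ℝ} (hd : IntervalIntegrable d volume a b) :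
    ∫ θ in a..b, v ⬝ᵥ d θ = v ⬝ᵥ ∫ θ in a..b, d θ :=
  (LinearMap.toContinuousLinearMap (dotProductBilin ℝ ℝ v)).intervalIntegral_comp_comm hd

section AdmissibleVariations

variable {E : Type*} [NormedAddCommGroup E] [NormedSpace ℝ E]

def admissibleVariations (τ : ℝ) : Set (ℝ → E) :=
  {d | ContinuousOn d (Icc 0 τ) ∧ ∫ θ in (0:ℝ)..τ, d θ = 0}

variable {τ : ℝ}

theorem smul_mem_admissibleVariations (t : ℝ) {d : ℝ → E} (hd : d ∈ admissibleVariations τ) :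
    t • d ∈ admissibleVariations τ :=
  ⟨hd.1.const_smul t, by simp [intervalIntegral.integral_smul, hd.2]⟩

theorem forall_integral_eq_iff_forall_admissibleVariations (hτ : 0 ≤ τ) {c : ℝ → E}
    (hc : ContinuousOn c (Icc 0 τ)) {P : (ℝ → E) → Prop} :
    (∀ c', ContinuousOn c' (Icc 0 τ) → ∫ θ in (0:ℝ)..τ, c' θ = ∫ θ in (0:ℝ)..τ, c θ → P c') ↔
      ∀ d ∈ admissibleVariations τ, P (c + d) := by
  have hint {u : ℝ → E} (hu : ContinuousOn u (Icc 0 τ)) :=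
    hu.intervalIntegrable_of_Icc (μ := volume) hτ
  constructor
  · rintro hP d ⟨hd, hd₀⟩
    refine hP _ (hc.add hd) ?_
    simp [intervalIntegral.integral_add (hint hc) (hint hd), hd₀]
  · intro hP c' hc' hc'c
    simpa using hP (c' - c) ⟨hc'.sub hc, by
      simp [intervalIntegral.integral_sub (hint hc') (hint hc), hc'c]⟩

end AdmissibleVariations

theorem forall_admissibleVariations_integral_dotProduct_eq_zero_iff {ι : Type*} [Fintype ι]
    {τ : ℝ} (hτ : 0 < τ) {G : ℝ → ι → ℝ} (hG : ContinuousOn G (Icc 0 τ)) :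
    (∀ d ∈ admissibleVariations τ, ∫ θ in (0:ℝ)..τ, G θ ⬝ᵥ d θ = 0) ↔
      ∃ g, ∀ θ ∈ Icc 0 τ, G θ = g := by
  constructor
  · intro hG₀
    set g := τ⁻¹ • ∫ θ in (0:ℝ)..τ, G θ
    have hd : (fun θ => G θ - g) ∈ admissibleVariations τ := by
      refine ⟨hG.sub continuousOn_const, ?_⟩
      simp [intervalIntegral.integral_sub (hG.intervalIntegrable_of_Icc hτ.le), g, smul_smul,
        hτ.ne']
    have hint : IntervalIntegrable (fun θ => G θ - g) volume 0 τ :=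
      hd.1.intervalIntegrable_of_Icc hτ.le
    have hdd : ∫ θ in (0:ℝ)..τ, (G θ - g) ⬝ᵥ (G θ - g) = 0 := by
      calc ∫ θ in (0:ℝ)..τ, (G θ - g) ⬝ᵥ (G θ - g)
          = ∫ θ in (0:ℝ)..τ, (G θ ⬝ᵥ (G θ - g) - g ⬝ᵥ (G θ - g)) := by
            simp only [sub_dotProduct]
        _ = (∫ θ in (0:ℝ)..τ, G θ ⬝ᵥ (G θ - g)) - g ⬝ᵥ ∫ θ in (0:ℝ)..τ, (G θ - g) := by
          rw [intervalIntegral.integral_sub (ContinuousOn.intervalIntegrable_of_Icc hτ.le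
            (by fun_prop)) (ContinuousOn.intervalIntegrable_of_Icc hτ.le (by fun_prop)),
            intervalIntegral.integral_const_dotProduct g hint]
        _ = 0 := by rw [hG₀ _ hd, hd.2, dotProduct_zero, sub_zero]
    refine ⟨g, fun θ hθ => sub_eq_zero.mp (dotProduct_self_eq_zero.mp ?_)⟩
    exact eqOn_zero_of_intervalIntegral_eq_zero hτ (by fun_prop)
      (fun θ _ => Fintype.sum_nonneg fun _ => mul_self_nonneg _) hdd hθ
  · rintro ⟨g, hg⟩ d ⟨hd, hd₀⟩
    rw [intervalIntegral.integral_congr (g := fun θ => g ⬝ᵥ d θ)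
      (fun θ hθ => by rw [hg θ (uIcc_of_le hτ.le ▸ hθ)]),
      intervalIntegral.integral_const_dotProduct g (hd.intervalIntegrable_of_Icc hτ.le), hd₀,
      dotProduct_zero]

theorem sqNorm_eq_dotProduct {k : ℕ} (v : Fin k → ℝ) : sqNorm v = v ⬝ᵥ v := by
  simp [sqNorm, dotProduct, sq]

theorem sqNorm_nonneg {k : ℕ} (v : Fin k → ℝ) : 0 ≤ sqNorm v :=
  Finset.sum_nonneg fun _ _ => sq_nonneg _

theorem sqNorm_smul {k : ℕ} (t : ℝ) (v : Fin k → ℝ) : sqNorm (t • v) = t ^ 2 * sqNorm v := by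
  simp [sqNorm, Finset.mul_sum, mul_pow]

@[fun_prop]
theorem continuous_sqNorm {k : ℕ} : Continuous (sqNorm : (Fin k → ℝ) → ℝ) := by
  unfold sqNorm
  fun_prop

section J2

variable {N M : ℕ}

def J2Integrand (A : Matrix (Fin N) (Fin M) ℝ) (μ : ℝ) (m : Fin N → ℝ) (x : Fin M → ℝ) : ℝ :=
  sqNorm (A *ᵥ x - m) + μ * sqNorm x

-- Half the gradient of `J2Integrand A μ m` at `x`.
def J2Grad (A : Matrix (Fin N) (Fin M) ℝ) (μ : ℝ) (m : Fin N → ℝ) (x : Fin M → ℝ) :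
    Fin M → ℝ :=
  Aᵀ *ᵥ (A *ᵥ x - m) + μ • x

@[fun_prop]
theorem Continuous.J2Integrand {X : Type*} [TopologicalSpace X]
    {A : X → Matrix (Fin N) (Fin M) ℝ}
    {x : X → Fin M → ℝ} (hA : Continuous A) (hx : Continuous x) (μ : ℝ) (m : Fin N → ℝ) :
    Continuous fun p => J2Integrand (A p) μ m (x p) := by
  unfold _root_.J2Integrand
  fun_prop

@[fun_prop]
theorem Continuous.J2Grad {X : Type*} [TopologicalSpace X] {A : X → Matrix (Fin N) (Fin M) ℝ}
    {x : X → Fin M → ℝ} (hA : Continuous A) (hx : Continuous x) (μ : ℝ) (m : Fin N → ℝ) :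
    Continuous fun p => J2Grad (A p) μ m (x p) := by
  unfold _root_.J2Grad
  fun_prop

theorem J2Integrand_add (A : Matrix (Fin N) (Fin M) ℝ) (μ : ℝ) (m : Fin N → ℝ)
    (x y : Fin M → ℝ) :
    J2Integrand A μ m (x + y) =
      J2Integrand A μ m x + 2 * (J2Grad A μ m x ⬝ᵥ y) + J2Integrand A μ 0 y := by
  have hadj : (Aᵀ *ᵥ (A *ᵥ x - m)) ⬝ᵥ y = (A *ᵥ x - m) ⬝ᵥ (A *ᵥ y) := by
    rw [dotProduct_mulVec, ← mulVec_transpose]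
  simp only [J2Integrand, J2Grad, sqNorm_eq_dotProduct, mulVec_add, sub_zero, add_dotProduct,
    smul_dotProduct, hadj, add_sub_right_comm]
  simp only [add_dotProduct, dotProduct_add, dotProduct_comm (A *ᵥ y), dotProduct_comm y,
    smul_eq_mul]
  ring

variable {τ μ : ℝ} {Γ : ℝ → Matrix (Fin N) (Fin M) ℝ} {m : Fin N → ℝ}

theorem J2_eq_integral (hτ : 0 ≤ τ) (hΓ : ContinuousOn Γ (Icc 0 τ)) {c : ℝ → Fin M → ℝ}
    (hc : ContinuousOn c (Icc 0 τ)) :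
    J2 τ μ Γ m c = ∫ θ in (0:ℝ)..τ, J2Integrand (Γ θ) μ m (c θ) := by
  rw [J2, ← intervalIntegral.integral_const_mul, ← intervalIntegral.integral_add
    (ContinuousOn.intervalIntegrable_of_Icc hτ (by fun_prop))
    (ContinuousOn.intervalIntegrable_of_Icc hτ (by fun_prop))]
  rfl

theorem J2_add (hτ : 0 ≤ τ) (hΓ : ContinuousOn Γ (Icc 0 τ)) {c d : ℝ → Fin M → ℝ}
    (hc : ContinuousOn c (Icc 0 τ)) (hd : ContinuousOn d (Icc 0 τ)) :
    J2 τ μ Γ m (c + d) =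
      J2 τ μ Γ m c + 2 * (∫ θ in (0:ℝ)..τ, J2Grad (Γ θ) μ m (c θ) ⬝ᵥ d θ) + J2 τ μ Γ 0 d := by
  have hint {f : ℝ → ℝ} (hf : ContinuousOn f (Icc 0 τ)) :=
    hf.intervalIntegrable_of_Icc (μ := volume) hτ
  rw [J2_eq_integral hτ hΓ (hc.add hd), J2_eq_integral hτ hΓ hc, J2_eq_integral hτ hΓ hd,
    ← intervalIntegral.integral_const_mul]
  simp only [Pi.add_apply, J2Integrand_add]
  rw [intervalIntegral.integral_add (hint (by fun_prop)) (hint (by fun_prop)),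
    intervalIntegral.integral_add (hint (by fun_prop)) (hint (by fun_prop))]

theorem J2_smul (t : ℝ) (d : ℝ → Fin M → ℝ) : J2 τ μ Γ 0 (t • d) = t ^ 2 * J2 τ μ Γ 0 d := by
  simp only [J2, Pi.smul_apply, mulVec_smul, sub_zero, sqNorm_smul,
    intervalIntegral.integral_const_mul]
  ring

theorem J2_nonneg (hτ : 0 ≤ τ) (hμ : 0 ≤ μ) (c : ℝ → Fin M → ℝ) : 0 ≤ J2 τ μ Γ m c :=
  add_nonneg (intervalIntegral.integral_nonneg hτ fun _ _ => sqNorm_nonneg _)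
    (mul_nonneg hμ (intervalIntegral.integral_nonneg hτ fun _ _ => sqNorm_nonneg _))

end J2

theorem J2_euler_lagrange_iff
    (N M : ℕ) (τ μ : ℝ) (hτ : 0 < τ) (hμ : 0 < μ)
    (ψ : Fin M → ℝ) (mhat : Fin N → ℝ)
    (Γ : ℝ → Matrix (Fin N) (Fin M) ℝ)
    (hΓ : ContinuousOn Γ (Set.Icc 0 τ))
    (c : ℝ → Fin M → ℝ)
    (hc : ContinuousOn c (Set.Icc 0 τ))
    (hcψ : (∫ θ in (0:ℝ)..τ, c θ) = ψ) :
    (∀ c' : ℝ → Fin M → ℝ, ContinuousOn c' (Set.Icc 0 τ) →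
        (∫ θ in (0:ℝ)..τ, c' θ) = ψ → J2 τ μ Γ mhat c ≤ J2 τ μ Γ mhat c')
    ↔ ∃ lam : Fin M → ℝ, ∀ θ ∈ Set.Icc (0:ℝ) τ,
        (Γ θ)ᵀ.mulVec ((Γ θ).mulVec (c θ) - mhat) + μ • c θ + lam = 0 := by
  subst hcψ
  rw [forall_integral_eq_iff_forall_admissibleVariations hτ.le hc,
    forall_le_add_iff_forall_eq_zero (fun t d hd => smul_mem_admissibleVariations t hd)
      (fun d hd => J2_add hτ.le hΓ hc hd.1)
      (fun t d _ => by simp only [Pi.smul_apply, dotProduct_smul, smul_eq_mul,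
        intervalIntegral.integral_const_mul]; ring)
      (fun t d _ => J2_smul t d) (fun d _ => J2_nonneg hτ.le hμ.le d)]
  simp only [mul_eq_zero, two_ne_zero, false_or]
  rw [forall_admissibleVariations_integral_dotProduct_eq_zero_iff hτ (by fun_prop)]
  constructor
  · rintro ⟨g, hg⟩
    exact ⟨-g, fun θ hθ => by rw [← J2Grad, hg θ hθ, add_neg_cancel]⟩
  · rintro ⟨lam, hlam⟩
    exact ⟨-lam, fun θ hθ => eq_neg_of_add_eq_zero_left (hlam θ hθ)⟩
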